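/- Let f = Σ_{1 ≤ i < j < k ≤ 4} x_i x_j x_k in K[x_1,x_2,x_3,x_4]. For any permutation {i,j,k,ℓ} = {1,2,3,4}, the operator X_i X_j + X_k X_ℓ - X_i X_ℓ - X_j X_k annihilates f, but X_i X_j - X_j X_k does not annihilate f. -/

import Mathlib

open MvPolynomial

/-- Application of the monomial differential operator with exponents `s`. -/
noncomputable def mder {n : ℕ} {K : Type*} [CommSemiring K] (s : Fin n →₀ ℕ)
    (f : MvPolynomial (Fin n) K) : MvPolynomial (Fin n) K :=
  (List.finRange n).foldr (fun i g => (fun h => pderiv i h)^[s i] g) f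

/-- Application of a polynomial differential operator `α ∈ Q = K[X₁,…,X_n]` to `f`. -/
noncomputable def dapp {n : ℕ} {K : Type*} [CommSemiring K]
    (α f : MvPolynomial (Fin n) K) : MvPolynomial (Fin n) K :=
  ∑ s ∈ α.support, coeff s α • mder s f

lemma dapp_eq {n : ℕ} {K : Type*} [CommSemiring K] (α f : MvPolynomial (Fin n) K) :
    dapp α f = Finsupp.sum (AddMonoidAlgebra.coeff α) (fun s c => c • mder s f) :=
  by rw [dapp, MvPolynomial.sum_def]

lemma dapp_sub {n : ℕ} {K : Type*} [Field K] (α β f : MvPolynomial (Fin n) K) :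
    dapp (α - β) f = dapp α f - dapp β f := by
  simp only [dapp_eq, AddMonoidAlgebra.coeff_sub]
  exact Finsupp.sum_sub_index (fun a b₁ b₂ => sub_smul _ _ _)

lemma dapp_add {n : ℕ} {K : Type*} [Field K] (α β f : MvPolynomial (Fin n) K) :
    dapp (α + β) f = dapp α f + dapp β f := by
  simp only [dapp_eq, AddMonoidAlgebra.coeff_add]
  exact Finsupp.sum_add_index' (fun a => zero_smul _ _) (fun a b c => add_smul _ _ _)

lemma pderiv_comm' {σ K : Type*} [CommSemiring K] (a b : σ) (f : MvPolynomial σ K) :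
    pderiv a (pderiv b f) = pderiv b (pderiv a f) := by
  classical
  induction f using MvPolynomial.induction_on with
  | C => simp
  | add f g hf hg => simp [hf, hg]
  | mul_X f n hf =>
    simp [pderiv_mul, hf, pderiv_X, Pi.single_apply, apply_ite (pderiv a),
      apply_ite (pderiv b)]
    ring

lemma mder_eq {K : Type*} [Field K] (s : Fin 4 →₀ ℕ) (f : MvPolynomial (Fin 4) K) :
    mder s f = (fun h => pderiv 0 h)^[s 0] ((fun h => pderiv 1 h)^[s 1]
      ((fun h => pderiv 2 h)^[s 2] ((fun h => pderiv 3 h)^[s 3] f))) := by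
  simp [mder, List.finRange, show (Fin.succ 2 : Fin 4) = 3 from rfl]

lemma mder_pair {K : Type*} [Field K] (a b : Fin 4) (hab : a ≠ b)
    (f : MvPolynomial (Fin 4) K) :
    mder (Finsupp.single a 1 + Finsupp.single b 1) f = pderiv a (pderiv b f) := by
  rw [mder_eq]
  fin_cases a <;> fin_cases b <;> first
    | exact absurd rfl hab
    | (simp [Finsupp.single_apply]; try exact pderiv_comm' _ _ _)

lemma pd2 {K : Type*} [Field K] (a b : Fin 4) (hab : a ≠ b) :
    pderiv a (pderiv b
      (X 0 * X 1 * X 2 + X 0 * X 1 * X 3 + X 0 * X 2 * X 3 + X 1 * X 2 * X 3 :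
        MvPolynomial (Fin 4) K))
      = (X 0 + X 1 + X 2 + X 3) - X a - X b := by
  fin_cases a <;> fin_cases b <;> first
    | exact absurd rfl hab
    | (simp [pderiv_mul, pderiv_X]; try ring)

lemma dapp_XX {K : Type*} [Field K] (a b : Fin 4) (hab : a ≠ b) :
    dapp (X a * X b)
      (X 0 * X 1 * X 2 + X 0 * X 1 * X 3 + X 0 * X 2 * X 3 + X 1 * X 2 * X 3 :
        MvPolynomial (Fin 4) K)
      = (X 0 + X 1 + X 2 + X 3) - X a - X b := by
  classical
  have h : (X a * X b : MvPolynomial (Fin 4) K)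
      = monomial (Finsupp.single a 1 + Finsupp.single b 1) 1 := by
    rw [X, X, monomial_mul, one_mul]
  rw [dapp, h, support_monomial, if_neg one_ne_zero, Finset.sum_singleton,
    coeff_monomial, if_pos rfl, one_smul, mder_pair a b hab, pd2 a b hab]

/-- For `f = Σ_{i<j<k} x_i x_j x_k` in four variables, and `{i,j,k,l} = {1,2,3,4}`,
`X_iX_j + X_kX_l − X_iX_l − X_jX_k` annihilates `f`, but `X_iX_j − X_jX_k` does not. -/
theorem stmt6 (K : Type*) [Field K] [CharZero K] (i j k l : Fin 4)
    (hij : i ≠ j) (hik : i ≠ k) (hil : i ≠ l) (hjk : j ≠ k) (hjl : j ≠ l) (hkl : k ≠ l) :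
    dapp (X i * X j + X k * X l - X i * X l - X j * X k)
        (X 0 * X 1 * X 2 + X 0 * X 1 * X 3 + X 0 * X 2 * X 3 + X 1 * X 2 * X 3 :
          MvPolynomial (Fin 4) K) = 0 ∧
    dapp (X i * X j - X j * X k)
        (X 0 * X 1 * X 2 + X 0 * X 1 * X 3 + X 0 * X 2 * X 3 + X 1 * X 2 * X 3 :
          MvPolynomial (Fin 4) K) ≠ 0 := by
  constructor
  · rw [dapp_sub, dapp_sub, dapp_add, dapp_XX i j hij, dapp_XX k l hkl,
      dapp_XX i l hil, dapp_XX j k hjk]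
    ring
  · rw [dapp_sub, dapp_XX i j hij, dapp_XX j k hjk]
    have h : ((X 0 + X 1 + X 2 + X 3) - X i - X j) - ((X 0 + X 1 + X 2 + X 3) - X j - X k)
        = (X k - X i : MvPolynomial (Fin 4) K) := by ring
    rw [h, sub_ne_zero]
    exact fun hc => hik (X_injective hc).symm
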